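/- arXiv:2308.12170 — 3 statements merged into one kernel-verified Lean document; each statement's English description precedes it below -/
import Mathlib

section
/- Let V : [0,∞) → ℝ be a continuously differentiable function with V(t) ≥ E(t)ᵀPE(t)/(M² − E(t)ᵀPE(t)) whenever E(t)ᵀPE(t) < M², where E : [0,∞) → ℝⁿ is continuous, P is symmetric positive definite, and M > 0. If E(0)ᵀPE(0) < M² and dV/dt ≤ 0 for all t in any interval on which E(s)ᵀPE(s) < M² holds, then E(t)ᵀPE(t) < M² for all t ≥ 0. -/
open Matrix

theorem stmt_6 {n : ℕ} (P : Matrix (Fin n) (Fin n) ℝ) (hP : P.PosDef)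
    (M : ℝ) (hM : 0 < M) (V : ℝ → ℝ) (E : ℝ → Fin n → ℝ)
    (hV : ContDiff ℝ 1 V) (hE : Continuous E)
    (hbar : ∀ t ≥ (0 : ℝ), E t ⬝ᵥ P.mulVec (E t) < M ^ 2 →
      E t ⬝ᵥ P.mulVec (E t) / (M ^ 2 - E t ⬝ᵥ P.mulVec (E t)) ≤ V t)
    (h0 : E 0 ⬝ᵥ P.mulVec (E 0) < M ^ 2)
    (hVdot : ∀ t ≥ (0 : ℝ), E t ⬝ᵥ P.mulVec (E t) < M ^ 2 → deriv V t ≤ 0) :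
    ∀ t ≥ (0 : ℝ), E t ⬝ᵥ P.mulVec (E t) < M ^ 2 := by
  set g : ℝ → ℝ := fun t => E t ⬝ᵥ P.mulVec (E t) with hg
  have hgc : Continuous g := hE.dotProduct (Continuous.matrix_mulVec continuous_const hE)
  by_contra hcon
  push_neg at hcon
  obtain ⟨t₀, ht₀, hgt₀⟩ := hcon
  set S : Set ℝ := {t | 0 ≤ t ∧ M ^ 2 ≤ g t} with hS
  have hSne : S.Nonempty := ⟨t₀, ht₀, hgt₀⟩
  have hSbdd : BddBelow S := ⟨0, fun x hx => hx.1⟩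
  have hSclosed : IsClosed S := by
    have : S = Set.Ici (0:ℝ) ∩ g ⁻¹' Set.Ici (M ^ 2) := rfl
    rw [this]
    exact isClosed_Ici.inter (isClosed_Ici.preimage hgc)
  set T := sInf S with hT
  have hTS : T ∈ S := hSclosed.csInf_mem hSne hSbdd
  have hT0 : 0 ≤ T := hTS.1
  have hTpos : 0 < T := by
    rcases hT0.lt_or_eq with h | h
    · exact h
    · exact absurd (hTS.2) (by rw [← h]; exact not_le.2 h0)
  have hltT : ∀ s, 0 ≤ s → s < T → g s < M ^ 2 := by
    intro s hs hsT
    by_contra h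
    exact absurd hsT (not_lt.2 (csInf_le hSbdd ⟨hs, not_lt.1 h⟩))
  -- V is antitone on [0, T]
  have hanti : AntitoneOn V (Set.Icc 0 T) := by
    apply antitoneOn_of_deriv_nonpos (convex_Icc 0 T) hV.continuous.continuousOn
      (fun x _ => (hV.differentiable one_ne_zero x).differentiableWithinAt)
    intro x hx
    rw [interior_Icc] at hx
    exact hVdot x hx.1.le (hltT x hx.1.le hx.2)
  set B := max (V 0) 0 with hB
  have hB0 : 0 ≤ B := le_max_right _ _
  set c := B * M ^ 2 / (1 + B) with hc
  have h1B : (0:ℝ) < 1 + B := by linarith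
  have hcM : c < M ^ 2 := by
    rw [hc, div_lt_iff₀ h1B]
    nlinarith [sq_nonneg M, pow_pos hM 2]
  -- near T, g > c
  have hgTc : c < g T := lt_of_lt_of_le hcM hTS.2
  have hnhds : g ⁻¹' Set.Ioi c ∈ nhds T := (isOpen_Ioi.preimage hgc).mem_nhds hgTc
  obtain ⟨δ, hδ, hball⟩ := Metric.mem_nhds_iff.1 hnhds
  set t := max (T - δ / 2) (T / 2) with ht
  have htpos : 0 < t := lt_of_lt_of_le (by linarith) (le_max_right _ _)
  have htT : t < T := max_lt (by linarith) (by linarith)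
  have htδ : |t - T| < δ := by
    rw [abs_sub_lt_iff]
    constructor
    · linarith
    · have : T - δ / 2 ≤ t := le_max_left _ _
      linarith
  have hgtc : c < g t := hball (by simpa [Real.dist_eq] using htδ)
  have hgtM : g t < M ^ 2 := hltT t htpos.le htT
  have hVt : g t / (M ^ 2 - g t) ≤ V t := hbar t htpos.le hgtM
  have hVtV0 : V t ≤ V 0 := hanti ⟨le_refl 0, hT0⟩ ⟨htpos.le, htT.le⟩ htpos.le
  have hVB : V t ≤ B := le_trans hVtV0 (le_max_left _ _)
  have hden : 0 < M ^ 2 - g t := by linarith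
  have : g t ≤ B * (M ^ 2 - g t) := by
    have := le_trans hVt hVB
    rwa [div_le_iff₀ hden] at this
  have hgc' : g t ≤ c := by
    rw [hc, le_div_iff₀ h1B]
    nlinarith
  linarith
end

section
/- Let M_u > 0, f_M > 0, K̂ ∈ ℝⁿ, X ∈ ℝⁿ, l̂ > 0 with M_u ≥ |K̂ᵀX| − l̂f_M, and let f ∈ ℝ with |f| ≤ f_M. Define u = K̂ᵀX + l̂f and g = 0 if |u| < M_u, g = (M_u − u)/l̂ if u ≥ M_u, g = (−M_u − u)/l̂ if u ≤ −M_u. Then |f + g| ≤ f_M. -/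
open Matrix

/-- The correction cancels `f`, leaving `(M - k) / l`: it is bounded above through the saturation
inequality and below through the stability condition. -/
theorem abs_add_saturation_correction_le {k l f M F : ℝ} (hl : 0 < l)
    (hstab : |k| - l * F ≤ M) (hf : |f| ≤ F) (hsat : M ≤ k + l * f) :
    |f + (M - (k + l * f)) / l| ≤ F := by
  have hcorr : f + (M - (k + l * f)) / l = (M - k) / l := by field_simp; ring
  have hlf : l * f ≤ l * F := mul_le_mul_of_nonneg_left (le_of_abs_le hf) hl.le
  rw [hcorr, abs_div, abs_of_pos hl, div_le_iff₀ hl, abs_le]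
  constructor <;> linarith [le_abs_self k]

theorem stmt_10_general {n : ℕ} (Mu fM : ℝ)
    (Khat X : Fin n → ℝ) (lhat f : ℝ) (hl : 0 < lhat)
    (hstab : |Khat ⬝ᵥ X| - lhat * fM ≤ Mu) (hf : |f| ≤ fM)
    (u g : ℝ) (hu : u = Khat ⬝ᵥ X + lhat * f)
    (hg : g = if |u| < Mu then 0
      else if Mu ≤ u then (Mu - u) / lhat else (-Mu - u) / lhat) :
    |f + g| ≤ fM := by
  subst hg hu
  split_ifs with hlin hup
  · simpa using hf
  · exact abs_add_saturation_correction_le hl hstab hf hup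
  · -- the lower saturated regime is the upper one for `(-Khat ⬝ᵥ X, -f)`
    have hdown : Khat ⬝ᵥ X + lhat * f ≤ -Mu :=
      (le_abs'.mp (not_lt.mp hlin)).resolve_right hup
    have hneg := abs_add_saturation_correction_le (k := -(Khat ⬝ᵥ X)) (f := -f) (M := Mu) hl
      (by rwa [abs_neg]) (by rwa [abs_neg]) (by linarith)
    rw [← abs_neg]
    convert hneg using 2
    ring

theorem stmt_10 {n : ℕ} (Mu fM : ℝ) (hMu : 0 < Mu) (hfM : 0 < fM)
    (Khat X : Fin n → ℝ) (lhat f : ℝ) (hl : 0 < lhat)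
    (hstab : |Khat ⬝ᵥ X| - lhat * fM ≤ Mu) (hf : |f| ≤ fM)
    (u g : ℝ) (hu : u = Khat ⬝ᵥ X + lhat * f)
    (hg : g = if |u| < Mu then 0
      else if Mu ≤ u then (Mu - u) / lhat else (-Mu - u) / lhat) :
    |f + g| ≤ fM :=
  stmt_10_general Mu fM Khat X lhat f hl hstab hf u g hu hg
end

section
/- Suppose E : [0,∞) → ℝⁿ is uniformly continuous, P, Q are symmetric positive definite, M > 0, E(t)ᵀPE(t) ≤ M₀² < M² for all t, and ∫₀^∞ M²·E(t)ᵀQE(t)/(M² − E(t)ᵀPE(t))² dt < ∞. Then E(t) → 0 as t → ∞. -/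
open Matrix MeasureTheory Set Filter

lemma coercive_aux {n : ℕ} (Q : Matrix (Fin n) (Fin n) ℝ) (hQ : Q.PosDef) :
    ∃ c > 0, ∀ x : Fin n → ℝ, c * ‖x‖ ^ 2 ≤ x ⬝ᵥ Q.mulVec x := by
  have hcont : Continuous fun x : Fin n → ℝ => x ⬝ᵥ Q.mulVec x := by
    simp only [dotProduct, Matrix.mulVec]
    fun_prop
  rcases Nat.eq_zero_or_pos n with hn | hn
  · refine ⟨1, one_pos, fun x => ?_⟩
    subst hn
    have hx : x = 0 := Subsingleton.elim x 0
    rw [hx, norm_zero]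
    simp [dotProduct]
  · haveI : Nonempty (Fin n) := ⟨⟨0, hn⟩⟩
    have hne : (Metric.sphere (0 : Fin n → ℝ) 1).Nonempty :=
      NormedSpace.sphere_nonempty.2 (by norm_num)
    obtain ⟨x₀, hx₀, hmin⟩ := (isCompact_sphere (0 : Fin n → ℝ) 1).exists_isMinOn hne
      hcont.continuousOn
    have hx₀ne : x₀ ≠ 0 := by
      intro h
      rw [h] at hx₀
      simp at hx₀
    refine ⟨x₀ ⬝ᵥ Q.mulVec x₀, by simpa using hQ.dotProduct_mulVec_pos hx₀ne, fun x => ?_⟩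
    rcases eq_or_ne x 0 with rfl | hx
    · simp
    · have hr : (0:ℝ) < ‖x‖ := norm_pos_iff.2 hx
      set u : Fin n → ℝ := ‖x‖⁻¹ • x with hu
      have hunorm : u ∈ Metric.sphere (0 : Fin n → ℝ) 1 := by
        simp [hu, norm_smul, abs_of_pos (inv_pos.2 hr), inv_mul_cancel₀ hr.ne']
      have hle : x₀ ⬝ᵥ Q.mulVec x₀ ≤ u ⬝ᵥ Q.mulVec u := hmin hunorm
      have hxu : x = ‖x‖ • u := by
        rw [hu, smul_smul, mul_inv_cancel₀ hr.ne', one_smul]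
      have hkey : x ⬝ᵥ Q.mulVec x = ‖x‖ ^ 2 * (u ⬝ᵥ Q.mulVec u) := by
        conv_lhs => rw [hxu]
        rw [Matrix.mulVec_smul, smul_dotProduct, dotProduct_smul,
          smul_eq_mul, smul_eq_mul]
        ring
      nlinarith [sq_nonneg ‖x‖]

theorem stmt_18 {n : ℕ} (P Q : Matrix (Fin n) (Fin n) ℝ)
    (hP : P.PosDef) (hQ : Q.PosDef) (M M0 : ℝ) (hM : 0 < M)
    (hM0 : M0 ^ 2 < M ^ 2)
    (E : ℝ → Fin n → ℝ) (hUC : UniformContinuous E)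
    (hbound : ∀ t ≥ (0 : ℝ), E t ⬝ᵥ P.mulVec (E t) ≤ M0 ^ 2)
    (hint : MeasureTheory.IntegrableOn
      (fun t => M ^ 2 * (E t ⬝ᵥ Q.mulVec (E t))
        / (M ^ 2 - E t ⬝ᵥ P.mulVec (E t)) ^ 2) (Set.Ici 0)) :
    Filter.Tendsto E Filter.atTop (nhds 0) := by
  obtain ⟨c, hc, hcQ⟩ := coercive_aux Q hQ
  have hEcont : Continuous E := hUC.continuous
  set f : ℝ → ℝ := fun t => ‖E t‖ ^ 2 with hf
  have hfcont : Continuous f := by fun_prop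
  have hfnonneg : ∀ t, 0 ≤ f t := fun t => by positivity
  set g : ℝ → ℝ := fun t => M ^ 2 * (E t ⬝ᵥ Q.mulVec (E t))
      / (M ^ 2 - E t ⬝ᵥ P.mulVec (E t)) ^ 2 with hg
  -- pointwise comparison on Ici 0
  have hPE : ∀ t, 0 ≤ E t ⬝ᵥ P.mulVec (E t) := by
    intro t
    have := hP.posSemidef.dotProduct_mulVec_nonneg (E t)
    simpa using this
  have hfg : ∀ t ∈ Set.Ici (0:ℝ), f t ≤ (M ^ 2 / c) * g t := by
    intro t ht
    have hd : 0 < M ^ 2 - E t ⬝ᵥ P.mulVec (E t) := by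
      have := hbound t ht
      linarith
    have hd2 : (M ^ 2 - E t ⬝ᵥ P.mulVec (E t)) ^ 2 ≤ (M ^ 2) ^ 2 := by
      have := hPE t
      nlinarith
    have h3 : c * f t ≤ E t ⬝ᵥ Q.mulVec (E t) := hcQ (E t)
    have hft : 0 ≤ f t := hfnonneg t
    have hgt : c / M ^ 2 * f t ≤ g t := by
      rw [hg]
      simp only
      rw [le_div_iff₀ (by positivity)]
      have h5 : c / M ^ 2 * f t * (M ^ 2 - E t ⬝ᵥ P.mulVec (E t)) ^ 2
          ≤ c / M ^ 2 * f t * (M ^ 2) ^ 2 :=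
        mul_le_mul_of_nonneg_left hd2 (by positivity)
      have h6 : c / M ^ 2 * f t * (M ^ 2) ^ 2 = M ^ 2 * (c * f t) := by
        field_simp
      have h7 : M ^ 2 * (c * f t) ≤ M ^ 2 * (E t ⬝ᵥ Q.mulVec (E t)) :=
        mul_le_mul_of_nonneg_left h3 (by positivity)
      linarith
    have : f t = (M ^ 2 / c) * (c / M ^ 2 * f t) := by
      field_simp
    rw [this]
    exact mul_le_mul_of_nonneg_left hgt (by positivity)
  -- integrability of f on Ici 0
  have hfint : IntegrableOn f (Set.Ici 0) := by
    apply Integrable.mono' (hint.const_mul (M ^ 2 / c))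
      hfcont.aestronglyMeasurable.restrict
    filter_upwards [ae_restrict_mem measurableSet_Ici] with t ht
    rw [Real.norm_eq_abs, abs_of_nonneg (hfnonneg t)]
    exact hfg t ht
  -- by contradiction
  by_contra hcon
  rw [Metric.tendsto_atTop] at hcon
  push_neg at hcon
  obtain ⟨ε, hε, H⟩ := hcon
  obtain ⟨δ, hδ, hδ'⟩ := Metric.uniformContinuous_iff.1 hUC (ε / 2) (by positivity)
  -- F and its limit
  set F : ℝ → ℝ := fun T => ∫ s in Set.Ioc (0:ℝ) T, f s with hF
  have hintsub : ∀ a b : ℝ, 0 ≤ a → IntegrableOn f (Set.Ioc a b) := by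
    intro a b ha
    exact hfint.mono_set (fun x hx => le_trans ha (le_of_lt hx.1))
  have hFmono : Monotone F := by
    intro a b hab
    apply setIntegral_mono_set (hintsub 0 b le_rfl)
      (Filter.Eventually.of_forall fun t => hfnonneg t)
    exact (Set.Ioc_subset_Ioc_right hab).eventuallyLE
  have hFbdd : BddAbove (Set.range F) := by
    refine ⟨∫ s in Set.Ici (0:ℝ), f s, ?_⟩
    rintro _ ⟨T, rfl⟩
    apply setIntegral_mono_set hfint (Filter.Eventually.of_forall fun t => hfnonneg t)
    exact HasSubset.Subset.eventuallyLE (fun x hx => hx.1.le)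
  set L : ℝ := ⨆ T, F T with hL
  have hFlim : Filter.Tendsto F Filter.atTop (nhds L) := tendsto_atTop_ciSup hFmono hFbdd
  have hFleL : ∀ T, F T ≤ L := fun T => le_ciSup hFbdd T
  set κ : ℝ := (ε / 2) ^ 2 * (δ / 2) / 2 with hκ
  have hκpos : 0 < κ := by positivity
  have hev : ∀ᶠ T in Filter.atTop, L - κ < F T :=
    hFlim.eventually (eventually_gt_nhds (by linarith))
  obtain ⟨T₀, hT₀⟩ := Filter.eventually_atTop.1 hev
  obtain ⟨t, ht, htE⟩ := H (max T₀ 0)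
  have ht0 : (0:ℝ) ≤ t := le_trans (le_max_right _ _) ht
  have htT₀ : T₀ ≤ t := le_trans (le_max_left _ _) ht
  rw [dist_zero_right] at htE
  -- f ≥ (ε/2)^2 on Ioc t (t+δ/2)
  have hlow : ∀ s ∈ Set.Ioc t (t + δ / 2), (ε / 2) ^ 2 ≤ f s := by
    intro s hs
    have hdist : dist s t < δ := by
      rw [Real.dist_eq, abs_of_nonneg (by linarith [hs.1.le])]
      linarith [hs.2]
    have := hδ' hdist
    rw [dist_eq_norm] at this
    have hnorm : ε / 2 ≤ ‖E s‖ := by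
      have h1 : ‖E t‖ - ‖E s‖ ≤ ‖E s - E t‖ := by
        have := norm_sub_norm_le (E t) (E s)
        rwa [norm_sub_rev] at this
      linarith
    calc (ε / 2) ^ 2 ≤ ‖E s‖ ^ 2 := by nlinarith [norm_nonneg (E s)]
      _ = f s := rfl
  -- increment bound
  have hsplit : F (t + δ / 2) = F t + ∫ s in Set.Ioc t (t + δ / 2), f s := by
    rw [hF]
    simp only
    rw [← MeasureTheory.setIntegral_union (Set.Ioc_disjoint_Ioc_of_le le_rfl) measurableSet_Ioc
      (hintsub 0 t le_rfl) (hintsub t (t + δ / 2) ht0),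
      Set.Ioc_union_Ioc_eq_Ioc ht0 (by linarith)]
  have hinc : (ε / 2) ^ 2 * (δ / 2) ≤ ∫ s in Set.Ioc t (t + δ / 2), f s := by
    have := setIntegral_ge_of_const_le measurableSet_Ioc
      (by simp [Real.volume_Ioc]) hlow (hintsub t (t + δ / 2) ht0)
    have hvol : (MeasureTheory.volume (Set.Ioc t (t + δ / 2))).toReal = δ / 2 := by
      rw [Real.volume_Ioc]
      simp
      linarith
    rw [measureReal_def, hvol, smul_eq_mul, mul_comm] at this
    exact this
  have h1 := hT₀ t htT₀
  have h2 := hFleL (t + δ / 2)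
  rw [hsplit] at h2
  rw [hκ] at h1 hκpos
  linarith
end
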